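/- arXiv:2605.00031 — 6 statements merged into one kernel-verified Lean document; each statement's English description precedes it below -/
import Mathlib

section
/- Let G be a connected graph with n vertices and m edges. Then the spectral radius of G satisfies ρ(G) ≤ √(2m − n + 1). -/
open SimpleGraph Finset Matrix Polynomial

/-- The number of isolated vertices of the induced subgraph `G - S`:
vertices outside `S` with no neighbor outside `S`. -/
noncomputable def isolatedCount {V : Type*} (G : SimpleGraph V) (S : Finset V) : ℕ :=
  {v : V | v ∉ S ∧ ∀ w ∉ S, ¬ G.Adj v w}.ncard

/-- `G` has a `{P₃, P₄, P₅}`-factor: a spanning subgraph each of whose connected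
components is isomorphic to a path on 3, 4 or 5 vertices. -/
def HasP345Factor {V : Type*} (G : SimpleGraph V) : Prop :=
  ∃ H : SimpleGraph V, H ≤ G ∧
    ∀ c : H.ConnectedComponent, ∃ k, (k = 3 ∨ k = 4 ∨ k = 5) ∧
      Nonempty ((SimpleGraph.induce c.supp H) ≃g SimpleGraph.pathGraph k)

/-- The graph `K_s ∨ (K_{n-⌊5s/3⌋-1} ∪ (⌊2s/3⌋+1)·K_1)` on `n` vertices:
vertices `< s` form the clique `K_s` joined with everything, vertices in
`[s, n - ⌊2s/3⌋ - 1)` form the clique `K_{n-⌊5s/3⌋-1}`, and the remaining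
`⌊2s/3⌋ + 1` vertices are isolated in the second part of the join. -/
def extremalGraph (n s : ℕ) : SimpleGraph (Fin n) where
  Adj v w := v ≠ w ∧ ((v : ℕ) < s ∨ (w : ℕ) < s ∨
    ((v : ℕ) < n - 2 * s / 3 - 1 ∧ (w : ℕ) < n - 2 * s / 3 - 1))
  symm := ⟨fun v w h => ⟨h.1.symm, by tauto⟩⟩
  loopless := ⟨fun v h => h.1 rfl⟩

/-- The spectral radius of a graph: the largest eigenvalue of its adjacency
matrix over the reals. -/
noncomputable def specRad {V : Type*} [Finite V] (G : SimpleGraph V) : ℝ :=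
  letI := Fintype.ofFinite V
  letI := Classical.decEq V
  letI := Classical.decRel G.Adj
  sSup (spectrum ℝ (G.adjMatrix ℝ))

private lemma degree_one_le {V : Type*} [Fintype V] (G : SimpleGraph V) [DecidableRel G.Adj]
    (hG : G.Connected) {k i : V} (hki : k ≠ i) : 1 ≤ G.degree k := by
  rw [Nat.succ_le_iff, SimpleGraph.degree_pos_iff_exists_adj]
  obtain ⟨w⟩ := hG.preconnected k i
  cases w with
  | nil => exact absurd rfl hki
  | cons h p => exact ⟨_, h⟩

private lemma rowsum_bound {V : Type*} [Fintype V] [DecidableEq V] (G : SimpleGraph V)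
    [DecidableRel G.Adj] (hG : G.Connected) (i : V) :
    (∑ k ∈ G.neighborFinset i, G.degree k) + (Fintype.card V - 1) ≤ 2 * G.edgeFinset.card := by
  set s := G.neighborFinset i with hs
  have hi : i ∈ sᶜ := by
    simp [hs, SimpleGraph.notMem_neighborFinset_self]
  have hsplit : (∑ k ∈ s, G.degree k) + (∑ k ∈ sᶜ, G.degree k) = 2 * G.edgeFinset.card := by
    rw [Finset.sum_add_sum_compl, SimpleGraph.sum_degrees_eq_twice_card_edges]
  have h2 : ∑ k ∈ sᶜ, G.degree k = G.degree i + ∑ k ∈ sᶜ.erase i, G.degree k :=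
    (Finset.add_sum_erase _ _ hi).symm
  have h3 : (sᶜ.erase i).card ≤ ∑ k ∈ sᶜ.erase i, G.degree k := by
    calc (sᶜ.erase i).card = ∑ _k ∈ sᶜ.erase i, 1 := by simp
    _ ≤ _ := Finset.sum_le_sum (fun k hk =>
        degree_one_le G hG (Finset.mem_erase.mp hk).1)
  have hcard : sᶜ.card = Fintype.card V - s.card := Finset.card_compl s
  have hse : (sᶜ.erase i).card = sᶜ.card - 1 := Finset.card_erase_of_mem hi
  have hle : s.card ≤ Fintype.card V := Finset.card_le_univ s
  have h1c : 1 ≤ sᶜ.card := Finset.card_pos.mpr ⟨i, hi⟩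
  have hdeg : G.degree i = s.card := rfl
  omega

private lemma key {V : Type*} {instV : Fintype V} [DecidableEq V] (G : SimpleGraph V)
    [DecidableRel G.Adj] (hG : G.Connected) (n m : ℕ)
    (hn : Fintype.card V = n) (hm : G.edgeSet.ncard = m) :
    sSup (spectrum ℝ (G.adjMatrix ℝ)) ≤ Real.sqrt (2 * (m : ℝ) - n + 1) := by
  have hm' : G.edgeFinset.card = m := by
    rw [← hm, ← SimpleGraph.coe_edgeFinset, Set.ncard_coe_finset]
  have hne : Nonempty V := hG.nonempty
  obtain ⟨i0⟩ := hne
  have hn1 : 1 ≤ n := by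
    rw [← hn]; exact Fintype.card_pos_iff.mpr ⟨i0⟩
  have hb0 : (n : ℝ) - 1 ≤ 2 * (m : ℝ) := by
    have h := rowsum_bound G hG i0
    have : (Fintype.card V - 1 : ℕ) ≤ 2 * G.edgeFinset.card := le_trans (by omega) h
    rw [hn, hm'] at this
    have := (Nat.cast_le (α := ℝ)).mpr this
    push_cast [Nat.cast_sub hn1] at this
    linarith
  have hb : 0 ≤ 2 * (m : ℝ) - n + 1 := by linarith
  apply Real.sSup_le _ (Real.sqrt_nonneg _)
  intro μ hμ
  set A := G.adjMatrix ℝ with hA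
  -- μ² is an eigenvalue of A²
  have hsq : (μ ^ 2) ∈ spectrum ℝ (A ^ 2) := by
    have h := spectrum.subset_polynomial_aeval A ((X) ^ 2 : Polynomial ℝ) ⟨μ, hμ, rfl⟩
    simpa using h
  have hev : Module.End.HasEigenvalue (Matrix.toLin' (A ^ 2)) (μ ^ 2) := by
    rw [Module.End.hasEigenvalue_iff_mem_spectrum]
    have h1 : Matrix.toLin' (A ^ 2) = Matrix.toLinAlgEquiv (Pi.basisFun ℝ V) (A ^ 2) := by
      rw [← Matrix.toLin_eq_toLin']; rfl
    rw [h1, AlgEquiv.spectrum_eq (Matrix.toLinAlgEquiv <| Pi.basisFun ℝ V)]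
    exact hsq
  obtain ⟨k, hk⟩ := eigenvalue_mem_ball hev
  -- entries of A² are nonnegative
  have hpos : ∀ a b : V, 0 ≤ (A ^ 2) a b := by
    intro a b
    rw [pow_two, Matrix.mul_apply]
    refine Finset.sum_nonneg fun l _ => mul_nonneg ?_ ?_ <;>
      · rw [hA, SimpleGraph.adjMatrix_apply]; split <;> norm_num
  have hball : μ ^ 2 ≤ ∑ j, (A ^ 2) k j := by
    rw [Metric.mem_closedBall, Real.dist_eq] at hk
    have h1 : μ ^ 2 - (A ^ 2) k k ≤ ∑ j ∈ Finset.univ.erase k, ‖(A ^ 2) k j‖ :=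
      le_trans (le_abs_self _) hk
    have h2 : ∑ j ∈ Finset.univ.erase k, ‖(A ^ 2) k j‖ =
        ∑ j ∈ Finset.univ.erase k, (A ^ 2) k j := by
      exact Finset.sum_congr rfl fun j _ => Real.norm_of_nonneg (hpos k j)
    rw [h2] at h1
    have h3 : (A ^ 2) k k + ∑ j ∈ Finset.univ.erase k, (A ^ 2) k j = ∑ j, (A ^ 2) k j :=
      Finset.add_sum_erase _ _ (Finset.mem_univ k)
    linarith
  -- row sums of A²
  have hdegrow : ∀ l : V, ∑ j, A l j = (G.degree l : ℝ) := by
    intro l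
    have : ∑ j, A l j = (A *ᵥ (fun _ => 1)) l := by
      simp [hA, Matrix.mulVec, dotProduct]
    rw [this, hA, SimpleGraph.adjMatrix_mulVec_apply, Finset.sum_const, SimpleGraph.degree]
    simp
  have hrow : ∑ j, (A ^ 2) k j = ∑ u ∈ G.neighborFinset k, (G.degree u : ℝ) := by
    calc ∑ j, (A ^ 2) k j = ∑ j, ∑ l, A k l * A l j := by
          simp [pow_two, Matrix.mul_apply]
    _ = ∑ l, A k l * ∑ j, A l j := by
          rw [Finset.sum_comm]; simp [Finset.mul_sum]
    _ = ∑ l, A k l * (G.degree l : ℝ) := by simp [hdegrow]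
    _ = (A *ᵥ (fun l => (G.degree l : ℝ))) k := by simp [Matrix.mulVec, dotProduct]
    _ = ∑ u ∈ G.neighborFinset k, (G.degree u : ℝ) := by
          rw [hA, SimpleGraph.adjMatrix_mulVec_apply]
  -- the combinatorial bound
  have hcomb : ∑ u ∈ G.neighborFinset k, (G.degree u : ℝ) ≤ 2 * (m : ℝ) - n + 1 := by
    have h := rowsum_bound G hG k
    rw [hn, hm'] at h
    have h' := (Nat.cast_le (α := ℝ)).mpr h
    push_cast [Nat.cast_sub hn1] at h'
    have : (∑ u ∈ G.neighborFinset k, (G.degree u : ℝ)) =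
        ((∑ u ∈ G.neighborFinset k, G.degree u : ℕ) : ℝ) := by push_cast; ring_nf
    rw [this]
    linarith
  have hfin : μ ^ 2 ≤ 2 * (m : ℝ) - n + 1 := by
    rw [hrow] at hball; linarith
  calc μ ≤ |μ| := le_abs_self μ
  _ = Real.sqrt (μ ^ 2) := (Real.sqrt_sq_eq_abs μ).symm
  _ ≤ Real.sqrt (2 * (m : ℝ) - n + 1) := Real.sqrt_le_sqrt hfin

theorem stmt3 {V : Type*} [Fintype V] (G : SimpleGraph V) (hG : G.Connected)
    (n m : ℕ) (hn : Fintype.card V = n) (hm : G.edgeSet.ncard = m) :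
    specRad G ≤ Real.sqrt (2 * (m : ℝ) - n + 1) := by
  rw [specRad]
  letI := Classical.decEq V
  letI := Classical.decRel G.Adj
  refine key (instV := Fintype.ofFinite V) G hG n m ?_ hm
  rw [Subsingleton.elim (Fintype.ofFinite V) ‹Fintype V›]
  exact hn
end

section
/- Let n, s, δ be positive integers with s ≡ 0 (mod 3), δ ≡ 1 (mod 3), δ + 1 ≤ s, 5s ≤ 3n − 3, and 3n ≥ 20δ + 53. Then the number of edges of K_s ∨ (K_{n−⌊5s/3⌋−1} ∪ (⌊2s/3⌋+1)·K_1) is at most the number of edges of K_δ ∨ (K_{n−⌊5δ/3⌋−1} ∪ (⌊2δ/3⌋+1)·K_1). -/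
open SimpleGraph

instance (n s : ℕ) : DecidableRel (extremalGraph n s).Adj := fun v w =>
  inferInstanceAs (Decidable (v ≠ w ∧ ((v : ℕ) < s ∨ (w : ℕ) < s ∨
    ((v : ℕ) < n - 2 * s / 3 - 1 ∧ (w : ℕ) < n - 2 * s / 3 - 1))))

open Finset in
lemma deg_extremal (n s : ℕ) (hs1 : 1 ≤ s) (hsm : s ≤ n - 2 * s / 3 - 1) (v : Fin n) :
    (extremalGraph n s).degree v =
      if (v : ℕ) < s then n - 1
      else if (v : ℕ) < n - 2 * s / 3 - 1 then n - 2 * s / 3 - 2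
      else s := by
  set m := n - 2 * s / 3 - 1 with hm
  have hsn : s < n := by omega
  have hmn : m < n := by omega
  rw [← SimpleGraph.card_neighborFinset_eq_degree]
  by_cases hv : (v : ℕ) < s
  · have : (extremalGraph n s).neighborFinset v = Finset.univ.erase v := by
      ext w
      simp only [SimpleGraph.mem_neighborFinset, Finset.mem_erase, Finset.mem_univ, and_true]
      constructor
      · exact fun h => h.1.symm
      · exact fun h => ⟨fun e => h e.symm, Or.inl hv⟩
    rw [this, Finset.card_erase_of_mem (Finset.mem_univ v), Finset.card_univ,
      Fintype.card_fin, if_pos hv]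
  · by_cases hv2 : (v : ℕ) < m
    · have hvmem : v ∈ Finset.Iio (⟨m, hmn⟩ : Fin n) := by
        simp [Fin.lt_def, hv2]
      have : (extremalGraph n s).neighborFinset v
          = (Finset.Iio (⟨m, hmn⟩ : Fin n)).erase v := by
        ext w
        simp only [SimpleGraph.mem_neighborFinset, Finset.mem_erase, Finset.mem_Iio,
          Fin.lt_def]
        show ((extremalGraph n s).Adj v w) ↔ _
        unfold extremalGraph
        simp only [ne_eq]
        constructor
        · rintro ⟨hne, h | h | h⟩
          · omega
          · exact ⟨fun e => hne e.symm, by omega⟩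
          · exact ⟨fun e => hne e.symm, h.2⟩
        · rintro ⟨hne, hw⟩
          exact ⟨fun e => hne e.symm, Or.inr (Or.inr ⟨hv2, hw⟩)⟩
      rw [this, Finset.card_erase_of_mem hvmem, Fin.card_Iio]
      simp only [if_neg hv, if_pos hv2]
      omega
    · have : (extremalGraph n s).neighborFinset v = Finset.Iio (⟨s, hsn⟩ : Fin n) := by
        ext w
        simp only [SimpleGraph.mem_neighborFinset, Finset.mem_Iio, Fin.lt_def]
        show ((extremalGraph n s).Adj v w) ↔ _
        unfold extremalGraph
        simp only [ne_eq]
        constructor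
        · rintro ⟨hne, h | h | h⟩
          · omega
          · exact h
          · omega
        · intro hw
          exact ⟨fun e => by omega, Or.inr (Or.inl hw)⟩
      rw [this, Fin.card_Iio]
      simp [if_neg hv, if_neg hv2]

open Finset in
lemma twice_edges (n s : ℕ) (hs1 : 1 ≤ s) (hsm : s ≤ n - 2 * s / 3 - 1) :
    2 * (extremalGraph n s).edgeFinset.card
      = s * (n - 1) + (n - 2 * s / 3 - 1 - s) * (n - 2 * s / 3 - 2)
        + (2 * s / 3 + 1) * s := by
  set m := n - 2 * s / 3 - 1 with hm
  have hsn : s < n := by omega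
  have hmn : m < n := by omega
  rw [← SimpleGraph.sum_degrees_eq_twice_card_edges]
  have hdeg : ∀ v : Fin n, (extremalGraph n s).degree v =
      if (v : ℕ) < s then n - 1 else if (v : ℕ) < m then n - 2 * s / 3 - 2 else s :=
    deg_extremal n s hs1 hsm
  calc ∑ v : Fin n, (extremalGraph n s).degree v
      = ∑ v : Fin n, (if (v : ℕ) < s then n - 1
          else if (v : ℕ) < m then n - 2 * s / 3 - 2 else s) :=
        Finset.sum_congr rfl fun v _ => hdeg v
    _ = _ := by
        rw [Finset.sum_ite, Finset.sum_ite]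
        have h1 : Finset.univ.filter (fun v : Fin n => (v : ℕ) < s)
            = Finset.Iio (⟨s, hsn⟩ : Fin n) := by
          ext w; simp [Fin.lt_def]
        have h2 : (Finset.univ.filter (fun v : Fin n => ¬ (v : ℕ) < s)).filter
              (fun v : Fin n => (v : ℕ) < m)
            = Finset.Ico (⟨s, hsn⟩ : Fin n) (⟨m, hmn⟩ : Fin n) := by
          ext w; simp [Fin.lt_def, Fin.le_def]
        have h3 : (Finset.univ.filter (fun v : Fin n => ¬ (v : ℕ) < s)).filter
              (fun v : Fin n => ¬ (v : ℕ) < m)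
            = Finset.Ici (⟨m, hmn⟩ : Fin n) := by
          ext w; simp [Fin.lt_def, Fin.le_def]; omega
        rw [Finset.sum_const, Finset.sum_const, Finset.sum_const, h1, h2, h3,
          Fin.card_Iio, Fin.card_Ico, Fin.card_Ici]
        simp only [smul_eq_mul]
        have : n - m = 2 * s / 3 + 1 := by omega
        rw [this]
        ring_nf

theorem stmt6 (n s δ : ℕ) (hn1 : 1 ≤ n) (hs1 : 1 ≤ s) (hδ1 : 1 ≤ δ)
    (hs : s % 3 = 0) (hδ : δ % 3 = 1) (hsδ : δ + 1 ≤ s)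
    (hsn : 5 * s + 3 ≤ 3 * n) (hn : 20 * δ + 53 ≤ 3 * n) :
    (extremalGraph n s).edgeSet.ncard ≤ (extremalGraph n δ).edgeSet.ncard := by
  obtain ⟨a, rfl⟩ : ∃ a, s = 3 * a := ⟨s / 3, by omega⟩
  obtain ⟨b, rfl⟩ : ∃ b, δ = 3 * b + 1 := ⟨δ / 3, by omega⟩
  have ha1 : 1 ≤ a := by omega
  have hna : 5 * a + 1 ≤ n := by omega
  have hnb : 20 * b + 25 ≤ n := by omega
  have hab : b + 1 ≤ a := by omega
  have hda : 2 * (3 * a) / 3 = 2 * a := by omega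
  have hdb : 2 * (3 * b + 1) / 3 = 2 * b := by omega
  have hEs := twice_edges n (3 * a) (by omega) (by omega)
  have hEd := twice_edges n (3 * b + 1) (by omega) (by omega)
  rw [hda] at hEs
  rw [hdb] at hEd
  have hcard : ∀ k : ℕ, (extremalGraph n k).edgeSet.ncard
      = (extremalGraph n k).edgeFinset.card := by
    intro k
    rw [Set.ncard_eq_toFinset_card']
    congr 1
  rw [hcard, hcard]
  have key : (3 * a) * (n - 1) + (n - 2 * a - 1 - 3 * a) * (n - 2 * a - 2)
        + (2 * a + 1) * (3 * a)
      ≤ (3 * b + 1) * (n - 1) + (n - 2 * b - 1 - (3 * b + 1)) * (n - 2 * b - 2)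
        + (2 * b + 1) * (3 * b + 1) := by
    zify [show (1:ℕ) ≤ n by omega, show 2*a ≤ n by omega, show (1:ℕ) ≤ n - 2*a by omega,
      show 3*a ≤ n - 2*a - 1 by omega, show (2:ℕ) ≤ n - 2*a by omega,
      show 2*b ≤ n by omega, show (1:ℕ) ≤ n - 2*b by omega,
      show 3*b+1 ≤ n - 2*b - 1 by omega, show (2:ℕ) ≤ n - 2*b by omega]
    nlinarith [mul_nonneg (by omega : (0:ℤ) ≤ (a:ℤ) - b - 1)
        (by omega : (0:ℤ) ≤ 3*(n:ℤ) - 15*a - 3),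
      mul_nonneg (by omega : (0:ℤ) ≤ (a:ℤ) - b - 1)
        (by omega : (0:ℤ) ≤ 3*(n:ℤ) - 60*b - 73),
      mul_nonneg (by omega : (0:ℤ) ≤ (a:ℤ) - b - 1)
        (by omega : (0:ℤ) ≤ (a:ℤ) - b - 1)]
  omega
end

section
/- Let n, s, δ be positive integers with s ≡ 0 (mod 3), δ ≡ 2 (mod 3), δ + 1 ≤ s, 5s ≤ 3n − 3, and 3n ≥ 20δ + 53. Then the number of edges of K_s ∨ (K_{n−⌊5s/3⌋−1} ∪ (⌊2s/3⌋+1)·K_1) is at most the number of edges of K_δ ∨ (K_{n−⌊5δ/3⌋−1} ∪ (⌊2δ/3⌋+1)·K_1). -/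
open SimpleGraph Finset

instance inst_s7 (n s : ℕ) : DecidableRel (extremalGraph n s).Adj := fun v w =>
  decidable_of_iff (v ≠ w ∧ ((v : ℕ) < s ∨ (w : ℕ) < s ∨
    ((v : ℕ) < n - 2 * s / 3 - 1 ∧ (w : ℕ) < n - 2 * s / 3 - 1))) Iff.rfl

lemma adj_iff {n s : ℕ} {v w : Fin n} : (extremalGraph n s).Adj v w ↔
    v ≠ w ∧ ((v : ℕ) < s ∨ (w : ℕ) < s ∨
    ((v : ℕ) < n - 2 * s / 3 - 1 ∧ (w : ℕ) < n - 2 * s / 3 - 1)) := Iff.rfl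

lemma card_filter_lt (n m : ℕ) (h : m ≤ n) :
    #(Finset.univ.filter (fun w : Fin n => (w : ℕ) < m)) = m := by
  have : Finset.univ.filter (fun w : Fin n => (w : ℕ) < m)
      = (Finset.range m).attachFin (fun i hi => lt_of_lt_of_le (Finset.mem_range.mp hi) h) := by
    ext w; simp [Finset.mem_attachFin]
  rw [this, Finset.card_attachFin, Finset.card_range]

lemma deg_eq (n s m : ℕ) (hmdef : m = n - 2 * s / 3 - 1) (hsm : s ≤ m) (hmn : m < n)
    (v : Fin n) : (extremalGraph n s).degree v =
      if (v : ℕ) < s then n - 1 else if (v : ℕ) < m then m - 1 else s := by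
  subst hmdef
  rw [degree, neighborFinset_eq_filter]
  split_ifs with h1 h2
  · have : Finset.univ.filter ((extremalGraph n s).Adj v) = Finset.univ.erase v := by
      ext w
      simp only [Finset.mem_filter, Finset.mem_univ, true_and, Finset.mem_erase, adj_iff]
      constructor
      · rintro ⟨h, _⟩; exact ⟨Ne.symm h, trivial⟩
      · rintro ⟨h, _⟩; exact ⟨Ne.symm h, Or.inl h1⟩
    rw [this, Finset.card_erase_of_mem (Finset.mem_univ v), Finset.card_univ, Fintype.card_fin]
  · have : Finset.univ.filter ((extremalGraph n s).Adj v)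
        = (Finset.univ.filter (fun w : Fin n => (w : ℕ) < n - 2 * s / 3 - 1)).erase v := by
      ext w
      simp only [Finset.mem_filter, Finset.mem_univ, true_and, Finset.mem_erase, adj_iff]
      constructor
      · rintro ⟨h, h'⟩
        refine ⟨Ne.symm h, ?_⟩
        rcases h' with h' | h' | h'
        · omega
        · omega
        · exact h'.2
      · rintro ⟨h, h'⟩; exact ⟨Ne.symm h, Or.inr (Or.inr ⟨h2, h'⟩)⟩
    rw [this, Finset.card_erase_of_mem, card_filter_lt n _ (by omega)]
    simp only [Finset.mem_filter, Finset.mem_univ, true_and]; exact h2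
  · have : Finset.univ.filter ((extremalGraph n s).Adj v)
        = Finset.univ.filter (fun w : Fin n => (w : ℕ) < s) := by
      ext w
      simp only [Finset.mem_filter, Finset.mem_univ, true_and, adj_iff]
      constructor
      · rintro ⟨h, h'⟩
        rcases h' with h' | h' | h'
        · omega
        · exact h'
        · omega
      · intro h
        refine ⟨?_, Or.inr (Or.inl h)⟩
        intro he; rw [he] at h1; omega
    rw [this, card_filter_lt n _ (by omega)]

lemma twoE (n s m : ℕ) (hmdef : m = n - 2 * s / 3 - 1) (hsm : s ≤ m) (hmn : m < n) :
    2 * (extremalGraph n s).edgeSet.ncard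
      = s * (n - 1) + (m - s) * (m - 1) + (n - m) * s := by
  rw [← SimpleGraph.coe_edgeFinset, Set.ncard_coe_finset,
    ← SimpleGraph.sum_degrees_eq_twice_card_edges]
  have : ∀ v : Fin n, (extremalGraph n s).degree v =
      if (v : ℕ) < s then n - 1 else if (v : ℕ) < m then m - 1 else s :=
    deg_eq n s m hmdef hsm hmn
  rw [Finset.sum_congr rfl (fun v _ => this v),
    Fin.sum_univ_eq_sum_range (fun i => if i < s then n - 1 else if i < m then m - 1 else s)]
  rw [Finset.range_eq_Ico, ← Finset.sum_Ico_consecutive _ (Nat.zero_le s) (by omega : s ≤ n),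
    ← Finset.sum_Ico_consecutive _ hsm (le_of_lt hmn)]
  have e1 : ∑ i ∈ Finset.Ico 0 s, (if i < s then n - 1 else if i < m then m - 1 else s) = s * (n-1) := by
    have h : ∀ i ∈ Finset.Ico 0 s, (if i < s then n - 1 else if i < m then m - 1 else s) = n - 1 := by
      intro i hi; rw [Finset.mem_Ico] at hi; rw [if_pos hi.2]
    rw [Finset.sum_congr rfl h, Finset.sum_const, Nat.card_Ico, smul_eq_mul, Nat.sub_zero]
  have e2 : ∑ i ∈ Finset.Ico s m, (if i < s then n - 1 else if i < m then m - 1 else s) = (m - s) * (m-1) := by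
    have h : ∀ i ∈ Finset.Ico s m, (if i < s then n - 1 else if i < m then m - 1 else s) = m - 1 := by
      intro i hi; rw [Finset.mem_Ico] at hi; rw [if_neg (by omega), if_pos hi.2]
    rw [Finset.sum_congr rfl h, Finset.sum_const, Nat.card_Ico, smul_eq_mul]
  have e3 : ∑ i ∈ Finset.Ico m n, (if i < s then n - 1 else if i < m then m - 1 else s) = (n - m) * s := by
    have h : ∀ i ∈ Finset.Ico m n, (if i < s then n - 1 else if i < m then m - 1 else s) = s := by
      intro i hi; rw [Finset.mem_Ico] at hi; rw [if_neg (by omega), if_neg (by omega)]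
    rw [Finset.sum_congr rfl h, Finset.sum_const, Nat.card_Ico, smul_eq_mul]
  rw [e1, e2, e3]; ring

lemma arith (a b n : ℕ) (ha : 1 ≤ a) (hab : b + 1 ≤ a) (h2 : 5 * a + 1 ≤ n)
    (h3 : 20 * b + 31 ≤ n) :
    3 * a * (n - 1) + (n - 2 * a - 1 - 3 * a) * (n - 2 * a - 1 - 1)
      + (n - (n - 2 * a - 1)) * (3 * a)
    ≤ (3 * b + 2) * (n - 1) + (n - (2 * b + 1) - 1 - (3 * b + 2)) * (n - (2 * b + 1) - 1 - 1)
      + (n - (n - (2 * b + 1) - 1)) * (3 * b + 2) := by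
  have e1 : n - 2 * a - 1 - 3 * a = n - 5 * a - 1 := by omega
  have e2 : n - 2 * a - 1 - 1 = n - 2 * a - 2 := by omega
  have e3 : n - (n - 2 * a - 1) = 2 * a + 1 := by omega
  have e4 : n - (2 * b + 1) - 1 - (3 * b + 2) = n - 5 * b - 4 := by omega
  have e5 : n - (2 * b + 1) - 1 - 1 = n - 2 * b - 3 := by omega
  have e6 : n - (n - (2 * b + 1) - 1) = 2 * b + 2 := by omega
  rw [e1, e2, e3, e4, e5, e6]
  zify [(show 1 ≤ n by omega), (show 5 * a ≤ n by omega), (show 1 ≤ n - 5 * a by omega),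
    (show 2 * a ≤ n by omega), (show 2 ≤ n - 2 * a by omega),
    (show 5 * b ≤ n by omega), (show 4 ≤ n - 5 * b by omega),
    (show 2 * b ≤ n by omega), (show 3 ≤ n - 2 * b by omega)]
  have ib : (0 : ℤ) ≤ (b : ℤ) := by positivity
  nlinarith [mul_nonneg (by push_cast; omega : (0:ℤ) ≤ (a:ℤ) - b - 1) (by push_cast; omega : (0:ℤ) ≤ (n:ℤ) - 5*a - 1),
    mul_nonneg (by push_cast; omega : (0:ℤ) ≤ (a:ℤ) - b - 1) (by push_cast; omega : (0:ℤ) ≤ (n:ℤ) - 20*b - 31),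
    mul_nonneg (by push_cast; omega : (0:ℤ) ≤ (n:ℤ) - 5*a - 1) (by push_cast; omega : (0:ℤ) ≤ (n:ℤ) - 20*b - 31),
    sq_nonneg ((a:ℤ) - b - 1), sq_nonneg ((n:ℤ) - 5*a - 1),
    mul_nonneg ib (by push_cast; omega : (0:ℤ) ≤ (n:ℤ) - 5*a - 1)]

theorem stmt7 (n s δ : ℕ) (hn1 : 1 ≤ n) (hs1 : 1 ≤ s) (hδ1 : 1 ≤ δ)
    (hs : s % 3 = 0) (hδ : δ % 3 = 2) (hsδ : δ + 1 ≤ s)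
    (hsn : 5 * s + 3 ≤ 3 * n) (hn : 20 * δ + 53 ≤ 3 * n) :
    (extremalGraph n s).edgeSet.ncard ≤ (extremalGraph n δ).edgeSet.ncard := by
  obtain ⟨a, rfl⟩ : ∃ a, s = 3 * a := ⟨s / 3, by omega⟩
  obtain ⟨b, rfl⟩ : ∃ b, δ = 3 * b + 2 := ⟨δ / 3, by omega⟩
  have hEs := twoE n (3 * a) (n - 2 * (3 * a) / 3 - 1) rfl (by omega) (by omega)
  have hEδ := twoE n (3 * b + 2) (n - 2 * (3 * b + 2) / 3 - 1) rfl (by omega) (by omega)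
  have d1 : 2 * (3 * a) / 3 = 2 * a := by omega
  have d2 : 2 * (3 * b + 2) / 3 = 2 * b + 1 := by omega
  rw [d1] at hEs
  rw [d2] at hEδ
  have key : 2 * (extremalGraph n (3 * a)).edgeSet.ncard
      ≤ 2 * (extremalGraph n (3 * b + 2)).edgeSet.ncard := by
    rw [hEs, hEδ]
    exact arith a b n (by omega) (by omega) (by omega) (by omega)
  omega
end

section
/- Let G be a graph of order n and let S be a nonempty subset of the vertex set of G with |S| = s such that the number of isolated vertices of G − S is at least ⌊2s/3⌋ + 1. Then the number of edges of G is at most the number of edges of K_s ∨ (K_{n−⌊5s/3⌋−1} ∪ (⌊2s/3⌋+1)·K_1). -/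
open SimpleGraph

theorem stmt12 {V : Type*} [Fintype V] (G : SimpleGraph V) (n s : ℕ)
    (hn : Fintype.card V = n) (S : Finset V) (hS : S.Nonempty) (hs : S.card = s)
    (hiso : 2 * s / 3 + 1 ≤ isolatedCount G S) :
    G.edgeSet.ncard ≤ (extremalGraph n s).edgeSet.ncard := by
  classical
  set t := 2 * s / 3 + 1 with ht
  have hisoF : t ≤ {v : V | v ∉ S ∧ ∀ w ∉ S, ¬ G.Adj v w}.toFinset.card := by
    rw [← Set.ncard_eq_toFinset_card']; exact hiso
  obtain ⟨I, hIsub, hIcard⟩ := Finset.exists_subset_card_eq hisoF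
  have hImem : ∀ v ∈ I, v ∉ S ∧ ∀ w ∉ S, ¬ G.Adj v w := by
    intro v hv
    have := hIsub hv
    simpa using this
  have hdisj : Disjoint S I := by
    rw [Finset.disjoint_right]; intro v hv; exact (hImem v hv).1
  have hn' : s + t ≤ n := by
    have := Finset.card_le_univ (S ∪ I)
    rwa [Finset.card_union_of_disjoint hdisj, hs, hIcard, hn] at this
  -- the intermediate graph H
  let H : SimpleGraph V :=
    { Adj := fun v w => v ≠ w ∧ (v ∈ S ∨ w ∈ S ∨ (v ∉ I ∧ w ∉ I))
      symm := ⟨fun v w h => ⟨h.1.symm, by tauto⟩⟩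
      loopless := ⟨fun v h => h.1 rfl⟩ }
  have hGH : G ≤ H := by
    intro v w hvw
    refine ⟨G.ne_of_adj hvw, ?_⟩
    by_cases hv : v ∈ S
    · exact Or.inl hv
    by_cases hw : w ∈ S
    · exact Or.inr (Or.inl hw)
    refine Or.inr (Or.inr ⟨fun hvI => ?_, fun hwI => ?_⟩)
    · exact (hImem v hvI).2 w hw hvw
    · exact (hImem w hwI).2 v hv hvw.symm
  -- the complement part
  let C : Finset V := (Finset.univ \ S) \ I
  have hCcard : C.card = n - s - t := by
    have hCeq : C = Finset.univ \ (S ∪ I) := by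
      ext v
      simp only [C, Finset.mem_sdiff, Finset.mem_union, Finset.mem_univ, true_and]
      tauto
    rw [hCeq, Finset.card_sdiff_of_subset (Finset.subset_univ _),
      Finset.card_union_of_disjoint hdisj, hs, hIcard, Finset.card_univ, hn]
    omega
  -- building the bijection
  let idxS : {x // x ∈ S} ≃ Fin s := S.equivFin.trans (finCongr hs)
  let idxI : {x // x ∈ I} ≃ Fin t := I.equivFin.trans (finCongr hIcard)
  let idxC : {x // x ∈ C} ≃ Fin (n - s - t) := C.equivFin.trans (finCongr hCcard)
  let f : V → Fin n := fun v =>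
    if hv : v ∈ S then ⟨(idxS ⟨v, hv⟩ : Fin s), by
      have := (idxS ⟨v, hv⟩).isLt; omega⟩
    else if hv' : v ∈ I then ⟨n - t + (idxI ⟨v, hv'⟩ : Fin t), by
      have := (idxI ⟨v, hv'⟩).isLt; omega⟩
    else ⟨s + (idxC ⟨v, by simp [C, hv, hv']⟩ : Fin (n - s - t)), by
      have := (idxC ⟨v, by simp [C, hv, hv']⟩).isLt; omega⟩
  have hfS : ∀ v, (f v : ℕ) < s ↔ v ∈ S := by
    intro v
    by_cases hv : v ∈ S
    · simp only [f, dif_pos hv]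
      exact ⟨fun _ => hv, fun _ => (idxS ⟨v, hv⟩).isLt⟩
    by_cases hv' : v ∈ I
    · simp only [f, dif_neg hv, dif_pos hv']
      constructor
      · intro h; omega
      · intro h; exact absurd h hv
    · simp only [f, dif_neg hv, dif_neg hv']
      constructor
      · intro h; omega
      · intro h; exact absurd h hv
  have hfI : ∀ v, n - t ≤ (f v : ℕ) ↔ v ∈ I := by
    intro v
    by_cases hv : v ∈ S
    · simp only [f, dif_pos hv]
      constructor
      · intro h; have := (idxS ⟨v, hv⟩).isLt; omega
      · intro h; exact absurd hv (hImem v h).1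
    by_cases hv' : v ∈ I
    · simp only [f, dif_neg hv, dif_pos hv']
      exact ⟨fun _ => hv', fun _ => Nat.le_add_right _ _⟩
    · simp only [f, dif_neg hv, dif_neg hv']
      constructor
      · intro h; have := (idxC ⟨v, by simp [C, hv, hv']⟩).isLt; omega
      · intro h; exact absurd h hv'
  have hinj : Function.Injective f := by
    intro v w h
    have hval : (f v : ℕ) = (f w : ℕ) := congrArg Fin.val h
    have hSS : v ∈ S ↔ w ∈ S := by rw [← hfS v, ← hfS w, hval]
    have hII : v ∈ I ↔ w ∈ I := by rw [← hfI v, ← hfI w, hval]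
    by_cases hv : v ∈ S
    · have hw : w ∈ S := hSS.mp hv
      have : idxS ⟨v, hv⟩ = idxS ⟨w, hw⟩ := by
        apply Fin.ext
        have h1 : (f v : ℕ) = (idxS ⟨v, hv⟩ : ℕ) := by simp [f, dif_pos hv]
        have h2 : (f w : ℕ) = (idxS ⟨w, hw⟩ : ℕ) := by simp [f, dif_pos hw]
        omega
      have := idxS.injective this
      exact congrArg Subtype.val this
    · have hw : w ∉ S := fun hw => hv (hSS.mpr hw)
      by_cases hv' : v ∈ I
      · have hw' : w ∈ I := hII.mp hv'
        have : idxI ⟨v, hv'⟩ = idxI ⟨w, hw'⟩ := by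
          apply Fin.ext
          have h1 : (f v : ℕ) = n - t + (idxI ⟨v, hv'⟩ : ℕ) := by
            simp [f, dif_neg hv, dif_pos hv']
          have h2 : (f w : ℕ) = n - t + (idxI ⟨w, hw'⟩ : ℕ) := by
            simp [f, dif_neg hw, dif_pos hw']
          omega
        have := idxI.injective this
        exact congrArg Subtype.val this
      · have hw' : w ∉ I := fun hw' => hv' (hII.mpr hw')
        have : idxC ⟨v, by simp [C, hv, hv']⟩ = idxC ⟨w, by simp [C, hw, hw']⟩ := by
          apply Fin.ext
          have h1 : (f v : ℕ) = s + (idxC ⟨v, by simp [C, hv, hv']⟩ : ℕ) := by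
            simp [f, dif_neg hv, dif_neg hv']
          have h2 : (f w : ℕ) = s + (idxC ⟨w, by simp [C, hw, hw']⟩ : ℕ) := by
            simp [f, dif_neg hw, dif_neg hw']
          omega
        have := idxC.injective this
        exact congrArg Subtype.val this
  have hbij : Function.Bijective f := by
    have hcard : Fintype.card V = Fintype.card (Fin n) := by simp [hn]
    exact (Fintype.bijective_iff_injective_and_card f).mpr ⟨hinj, by simp [hn]⟩
  let e : V ≃ Fin n := Equiv.ofBijective f hbij
  have hsub : n - 2 * s / 3 - 1 = n - t := by omega
  have iso : H ≃g extremalGraph n s := by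
    refine ⟨e, ?_⟩
    intro v w
    show (extremalGraph n s).Adj (f v) (f w) ↔ H.Adj v w
    constructor
    · rintro ⟨hne, hcase⟩
      refine ⟨fun hvw => hne (congrArg f hvw), ?_⟩
      rcases hcase with h | h | ⟨h1, h2⟩
      · exact Or.inl ((hfS v).mp h)
      · exact Or.inr (Or.inl ((hfS w).mp h))
      · rw [hsub] at h1 h2
        refine Or.inr (Or.inr ⟨fun hvI => ?_, fun hwI => ?_⟩)
        · exact absurd ((hfI v).mpr hvI) (by omega)
        · exact absurd ((hfI w).mpr hwI) (by omega)
    · rintro ⟨hne, hcase⟩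
      refine ⟨fun h => hne (hinj h), ?_⟩
      rcases hcase with h | h | ⟨h1, h2⟩
      · exact Or.inl ((hfS v).mpr h)
      · exact Or.inr (Or.inl ((hfS w).mpr h))
      · refine Or.inr (Or.inr ⟨?_, ?_⟩)
        · rw [hsub]
          have := (hfI v).not.mpr h1
          have := (f v).isLt
          omega
        · rw [hsub]
          have := (hfI w).not.mpr h2
          have := (f w).isLt
          omega
  calc G.edgeSet.ncard ≤ H.edgeSet.ncard :=
        Set.ncard_le_ncard (SimpleGraph.edgeSet_mono hGH) (Set.toFinite _)
    _ = (extremalGraph n s).edgeSet.ncard := by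
        rw [← Nat.card_coe_set_eq, ← Nat.card_coe_set_eq]
        exact Nat.card_congr iso.mapEdgeSet
end

section
/- Let G be a connected graph of order n and let S be a nonempty subset of the vertex set of G with |S| = s such that the number of isolated vertices of G − S is at least ⌊2s/3⌋ + 1. Then the spectral radius of G is at most the spectral radius of K_s ∨ (K_{n−⌊5s/3⌋−1} ∪ (⌊2s/3⌋+1)·K_1). -/
open SimpleGraph

open Matrix in
lemma rayleigh_le_max {m : Type*} [Fintype m] [DecidableEq m]
    {B : Matrix m m ℝ} (hB : B.IsHermitian) {μ : ℝ}
    (hμ : ∀ i, hB.eigenvalues i ≤ μ) (x : m → ℝ) :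
    x ⬝ᵥ (B *ᵥ x) ≤ μ * (x ⬝ᵥ x) := by
  set U : Matrix m m ℝ := (hB.eigenvectorUnitary : Matrix m m ℝ) with hU
  have hUU : U * star U = 1 := Matrix.mem_unitaryGroup_iff.mp hB.eigenvectorUnitary.2
  have h1 : μ • (1 : Matrix m m ℝ) = U * (μ • (1 : Matrix m m ℝ)) * star U := by
    rw [mul_smul_comm, smul_mul_assoc, mul_one, hUU]
  have h2 : μ • (1 : Matrix m m ℝ) - B =
      U * (Matrix.diagonal (fun i => μ - hB.eigenvalues i)) * star U := by
    conv_lhs => rw [hB.spectral_theorem, Unitary.conjStarAlgAut_apply, h1]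
    rw [← Matrix.sub_mul, ← Matrix.mul_sub]
    congr 1
    congr 1
    ext i j
    by_cases h : i = j <;> simp [Matrix.diagonal, h, Matrix.one_apply, mul_comm]
  have hC : (μ • (1 : Matrix m m ℝ) - B).PosSemidef := by
    rw [h2]
    exact (Matrix.posSemidef_diagonal_iff.mpr fun i => sub_nonneg.mpr (hμ i)).mul_mul_conjTranspose_same U
  have h3 := hC.dotProduct_mulVec_nonneg x
  simp only [star_trivial, RCLike.re_to_real] at h3
  have h4 : x ⬝ᵥ ((μ • (1 : Matrix m m ℝ) - B) *ᵥ x) = μ * (x ⬝ᵥ x) - x ⬝ᵥ (B *ᵥ x) := by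
    rw [Matrix.sub_mulVec, dotProduct_sub, Matrix.smul_mulVec, Matrix.one_mulVec,
      dotProduct_smul]
    simp only [smul_eq_mul]
  rw [h4] at h3
  linarith
open Matrix

open Matrix in
lemma abs_dot_le {m : Type*} [Fintype m] (M B : Matrix m m ℝ)
    (h0 : ∀ i j, 0 ≤ M i j) (hMB : ∀ i j, M i j ≤ B i j) (x : m → ℝ) :
    x ⬝ᵥ (M *ᵥ x) ≤ (fun i => |x i|) ⬝ᵥ (B *ᵥ (fun i => |x i|)) := by
  simp only [dotProduct, mulVec, Finset.mul_sum]
  refine Finset.sum_le_sum fun i _ => Finset.sum_le_sum fun j _ => ?_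
  calc x i * (M i j * x j) ≤ |x i * (M i j * x j)| := le_abs_self _
    _ = |x i| * (M i j * |x j|) := by
        rw [abs_mul, abs_mul, abs_of_nonneg (h0 i j)]
    _ ≤ |x i| * (B i j * |x j|) := by
        apply mul_le_mul_of_nonneg_left _ (abs_nonneg _)
        exact mul_le_mul_of_nonneg_right (hMB i j) (abs_nonneg _)

open Matrix in
lemma sSup_spectrum_le {m : Type*} [Fintype m] [DecidableEq m] [Nonempty m]
    {A B : Matrix m m ℝ} (hA : A.IsHermitian) (hB : B.IsHermitian)
    (h0 : ∀ i j, 0 ≤ A i j) (hAB : ∀ i j, A i j ≤ B i j) :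
    sSup (spectrum ℝ A) ≤ sSup (spectrum ℝ B) := by
  obtain ⟨i₀, -, hi₀⟩ := Finset.exists_max_image Finset.univ hB.eigenvalues ⟨Classical.arbitrary m, Finset.mem_univ _⟩
  set μ := hB.eigenvalues i₀ with hμdef
  have hμ : ∀ i, hB.eigenvalues i ≤ μ := fun i => hi₀ i (Finset.mem_univ i)
  have hB0 : ∀ i j, (0:ℝ) ≤ B i j := fun i j => (h0 i j).trans (hAB i j)
  have key : ∀ (M : Matrix m m ℝ), (∀ i j, 0 ≤ M i j) → (∀ i j, M i j ≤ B i j) →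
      ∀ lam ∈ spectrum ℝ M, lam ≤ μ := by
    intro M hM0 hMB lam hlam
    rw [← AlgEquiv.spectrum_eq (Matrix.toLinAlgEquiv' (R := ℝ) (n := m)) M] at hlam
    have hev : Module.End.HasEigenvalue (Matrix.toLinAlgEquiv' M) lam :=
      Module.End.hasEigenvalue_iff_mem_spectrum.mpr hlam
    obtain ⟨x, hx⟩ := hev.exists_hasEigenvector
    have hx0 : x ≠ 0 := hx.2
    have hxa : M *ᵥ x = lam • x := hx.apply_eq_smul
    have hxx : (0:ℝ) < x ⬝ᵥ x := by
      obtain ⟨i, hi⟩ := Function.ne_iff.mp hx0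
      have hi' : x i ≠ 0 := by simpa using hi
      exact Finset.sum_pos' (fun j _ => mul_self_nonneg _)
        ⟨i, Finset.mem_univ i, mul_self_pos.mpr hi'⟩
    have step1 : lam * (x ⬝ᵥ x) = x ⬝ᵥ (M *ᵥ x) := by
      rw [hxa, dotProduct_smul]; rfl
    have step2 := abs_dot_le M B hM0 hMB x
    have step3 := rayleigh_le_max hB hμ (fun i => |x i|)
    have habs : (fun i => |x i|) ⬝ᵥ (fun i => |x i|) = x ⬝ᵥ x := by
      simp only [dotProduct]
      exact Finset.sum_congr rfl fun i _ => abs_mul_abs_self _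
    rw [habs] at step3
    refine le_of_mul_le_mul_right ?_ hxx
    linarith [step1, step2, step3]
  have hne : (spectrum ℝ A).Nonempty :=
    ⟨hA.eigenvalues (Classical.arbitrary m), hA.eigenvalues_mem_spectrum_real _⟩
  have hbdd : BddAbove (spectrum ℝ B) := ⟨μ, fun lam hlam => key B hB0 (fun i j => le_refl _) lam hlam⟩
  calc sSup (spectrum ℝ A) ≤ μ := csSup_le hne (key A h0 hAB)
    _ ≤ sSup (spectrum ℝ B) := le_csSup hbdd (hB.eigenvalues_mem_spectrum_real i₀)
open SimpleGraph

lemma specRad_eq {V : Type*} [Fintype V] [DecidableEq V] (G : SimpleGraph V) [DecidableRel G.Adj] :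
    specRad G = sSup (spectrum ℝ (G.adjMatrix ℝ)) := by
  unfold specRad
  congr! <;> exact Subsingleton.elim _ _
open Matrix SimpleGraph

open Matrix in
lemma specRad_mono' {V : Type*} [Fintype V] [DecidableEq V] [Nonempty V] {n : ℕ}
    (G : SimpleGraph V) [DecidableRel G.Adj] (H : SimpleGraph (Fin n)) [DecidableRel H.Adj]
    (e : V ≃ Fin n) (hmap : ∀ v w, G.Adj v w → H.Adj (e v) (e w)) :
    sSup (spectrum ℝ (G.adjMatrix ℝ)) ≤ sSup (spectrum ℝ (H.adjMatrix ℝ)) := by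
  haveI : Nonempty (Fin n) := ⟨e (Classical.arbitrary V)⟩
  set A : Matrix (Fin n) (Fin n) ℝ := (G.adjMatrix ℝ).submatrix e.symm e.symm with hA
  have hspec : spectrum ℝ (G.adjMatrix ℝ) = spectrum ℝ A := by
    rw [hA]
    exact (AlgEquiv.spectrum_eq (Matrix.reindexAlgEquiv ℝ ℝ e) (G.adjMatrix ℝ)).symm
  have hAH : A.IsHermitian := by
    ext i j
    simp only [conjTranspose_apply, hA, submatrix_apply, SimpleGraph.adjMatrix_apply,
      star_trivial]
    by_cases h : G.Adj (e.symm j) (e.symm i)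
    · simp [h, (SimpleGraph.adj_comm ..).mp h]
    · rw [if_neg h, if_neg (fun hh => h ((SimpleGraph.adj_comm ..).mp hh))]
  have hBH : (H.adjMatrix ℝ).IsHermitian := by
    ext i j
    simp only [conjTranspose_apply, SimpleGraph.adjMatrix_apply, star_trivial]
    by_cases h : H.Adj j i
    · simp [h, (SimpleGraph.adj_comm ..).mp h]
    · rw [if_neg h, if_neg (fun hh => h ((SimpleGraph.adj_comm ..).mp hh))]
  have h0 : ∀ i j, (0:ℝ) ≤ A i j := by
    intro i j
    simp only [hA, submatrix_apply, SimpleGraph.adjMatrix_apply]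
    positivity
  have hAB : ∀ i j, A i j ≤ (H.adjMatrix ℝ) i j := by
    intro i j
    simp only [hA, submatrix_apply, SimpleGraph.adjMatrix_apply]
    by_cases h : G.Adj (e.symm i) (e.symm j)
    · have := hmap _ _ h
      rw [e.apply_symm_apply, e.apply_symm_apply] at this
      simp [h, this]
    · simp only [h, if_false]
      positivity
  rw [hspec]
  exact sSup_spectrum_le hAH hBH h0 hAB

theorem stmt13 {V : Type*} [Fintype V] (G : SimpleGraph V) (hconn : G.Connected)
    (n s : ℕ) (hn : Fintype.card V = n) (S : Finset V) (hS : S.Nonempty)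
    (hs : S.card = s) (hiso : 2 * s / 3 + 1 ≤ isolatedCount G S) :
    specRad G ≤ specRad (extremalGraph n s) := by
  classical
  obtain ⟨v0, hv0⟩ := hS
  haveI hne : Nonempty V := ⟨v0⟩
  have hn0 : 0 < n := hn ▸ Fintype.card_pos
  unfold isolatedCount at hiso
  set t := 2 * s / 3 + 1 with ht
  set I : Set V := {v : V | v ∉ S ∧ ∀ w ∉ S, ¬ G.Adj v w} with hIdef
  have hIcard : t ≤ I.toFinset.card := by
    rw [← Set.ncard_eq_toFinset_card']
    exact hiso
  obtain ⟨J, hJsub, hJcard⟩ := Finset.exists_subset_card_eq hIcard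
  have hJI : ∀ v ∈ J, v ∉ S ∧ ∀ w ∉ S, ¬ G.Adj v w := by
    intro v hv
    have h := hJsub hv
    rw [Set.mem_toFinset] at h
    exact h
  let g : V ≃ Fin n := Fintype.equivFinOfCardEq hn
  let c : V → ℕ := fun v => if v ∈ S then 0 else if v ∈ J then 2 else 1
  let f : V → ℕ := fun v => c v * n + (g v : ℕ)
  have hflt : ∀ u v : V, c u < c v → f u < f v := by
    intro u v h
    have h1 : (g u : ℕ) < n := (g u).isLt
    calc c u * n + (g u : ℕ) < c u * n + n := by omega
      _ = (c u + 1) * n := by ring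
      _ ≤ c v * n := Nat.mul_le_mul_right n h
      _ ≤ f v := Nat.le_add_right _ _
  have hf : Function.Injective f := by
    intro u v h
    have h1 : (g u : ℕ) < n := (g u).isLt
    have h2 : (g v : ℕ) < n := (g v).isLt
    have hcuv : ¬ c u < c v := fun hc => (hflt u v hc).ne h
    have hcvu : ¬ c v < c u := fun hc => (hflt v u hc).ne h.symm
    have hc : c u = c v := by omega
    have hfuv : c u * n + (g u : ℕ) = c v * n + (g v : ℕ) := h
    rw [hc] at hfuv
    have : (g u : ℕ) = (g v : ℕ) := by omega
    exact g.injective (Fin.ext this)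
  letI : LinearOrder V := LinearOrder.lift' f hf
  have hle : ∀ u v : V, u ≤ v ↔ f u ≤ f v := fun u v => Iff.rfl
  have hlt : ∀ u v : V, u < v ↔ f u < f v := fun u v => by
    rw [lt_iff_le_not_ge, lt_iff_le_not_ge]
    exact and_congr (hle u v) (not_congr (hle v u))
  have hcardu : (Finset.univ : Finset V).card = n := by rw [Finset.card_univ, hn]
  let e0 := Finset.orderIsoOfFin (Finset.univ : Finset V) hcardu
  let e : V ≃ Fin n :=
    (Equiv.subtypeUnivEquiv (fun v => Finset.mem_univ v)).symm.trans e0.symm.toEquiv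
  have helt : ∀ u v : V, e u < e v ↔ u < v := fun u v => by
    simpa [e, Equiv.trans_apply, Equiv.subtypeUnivEquiv] using
      e0.symm.lt_iff_lt (a := ⟨u, Finset.mem_univ u⟩) (b := ⟨v, Finset.mem_univ v⟩)
  have hcount : ∀ v : V, (e v : ℕ) = (Finset.univ.filter (fun u => u < v)).card := by
    intro v
    have h1 : (Finset.univ.filter (fun u : V => u < v)).card
        = (Finset.univ.filter (fun j : Fin n => j < e v)).card := by
      refine Finset.card_bij' (fun u _ => e u) (fun j _ => e.symm j) ?_ ?_ ?_ ?_
      · intro u hu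
        simp only [Finset.mem_filter, Finset.mem_univ, true_and] at hu ⊢
        exact (helt u v).mpr hu
      · intro j hj
        simp only [Finset.mem_filter, Finset.mem_univ, true_and] at hj ⊢
        have := (helt (e.symm j) v).mp
        rw [e.apply_symm_apply] at this
        exact this hj
      · intro u _; exact e.symm_apply_apply u
      · intro j _; exact e.apply_symm_apply j
    have h2 : (Finset.univ.filter (fun j : Fin n => j < e v)) = Finset.Iio (e v) := by
      ext j; simp [Finset.mem_Iio]
    rw [h1, h2, Fin.card_Iio]
  have hc0 : ∀ v ∈ S, c v = 0 := fun v hv => by simp [c, hv]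
  have hc1 : ∀ v, v ∉ S → 1 ≤ c v := fun v hv => by
    simp only [c, if_neg hv]; split <;> omega
  have hc2 : ∀ v ∈ J, c v = 2 := fun v hv => by
    simp [c, (hJI v hv).1, hv]
  have hc3 : ∀ v, v ∉ J → c v ≤ 1 := fun v hv => by
    simp only [c, if_neg hv]; split <;> omega
  have fact1 : ∀ v ∈ S, (e v : ℕ) < s := by
    intro v hv
    rw [hcount v, ← hs]
    apply Finset.card_lt_card
    rw [Finset.ssubset_def]
    constructor
    · intro u hu
      rw [Finset.mem_filter] at hu
      by_contra hu'
      have h1 : f v < f u := hflt v u (by have := hc0 v hv; have := hc1 u hu'; omega)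
      have h2 : f u < f v := (hlt u v).mp hu.2
      omega
    · intro h
      exact absurd (Finset.mem_filter.mp (h hv)).2 (lt_irrefl v)
  have fact2 : ∀ v, v ∉ J → (e v : ℕ) < n - t := by
    intro v hv
    have hcard2 : (Finset.univ \ J).card = n - t := by
      rw [Finset.card_sdiff_of_subset (Finset.subset_univ J), hcardu, hJcard]
    rw [hcount v, ← hcard2]
    apply Finset.card_lt_card
    rw [Finset.ssubset_def]
    constructor
    · intro u hu
      rw [Finset.mem_filter] at hu
      rw [Finset.mem_sdiff]
      refine ⟨Finset.mem_univ u, fun huJ => ?_⟩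
      have h1 : f v < f u := hflt v u (by have := hc2 u huJ; have := hc3 v hv; omega)
      have h2 : f u < f v := (hlt u v).mp hu.2
      omega
    · intro h
      have : v ∈ Finset.univ.filter (fun u => u < v) := h (Finset.mem_sdiff.mpr ⟨Finset.mem_univ v, hv⟩)
      exact absurd (Finset.mem_filter.mp this).2 (lt_irrefl v)
  have hmap : ∀ v w, G.Adj v w → (extremalGraph n s).Adj (e v) (e w) := by
    intro v w hvw
    show e v ≠ e w ∧ ((e v : ℕ) < s ∨ (e w : ℕ) < s ∨
      ((e v : ℕ) < n - 2 * s / 3 - 1 ∧ (e w : ℕ) < n - 2 * s / 3 - 1))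
    refine ⟨fun h => hvw.ne (e.injective h), ?_⟩
    by_cases hv : v ∈ S
    · exact Or.inl (fact1 v hv)
    by_cases hw : w ∈ S
    · exact Or.inr (Or.inl (fact1 w hw))
    refine Or.inr (Or.inr ⟨?_, ?_⟩)
    · have hvJ : v ∉ J := fun hvJ => (hJI v hvJ).2 w hw hvw
      have := fact2 v hvJ; omega
    · have hwJ : w ∉ J := fun hwJ => (hJI w hwJ).2 v hv hvw.symm
      have := fact2 w hwJ; omega
  rw [specRad_eq G, specRad_eq (extremalGraph n s)]
  exact specRad_mono' G (extremalGraph n s) e hmap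
end

section
/- Let n, s, δ be positive integers with δ not divisible by 3, s ≡ 0 (mod 3), δ + 1 ≤ s, 5s ≤ 3n − 3, and n ≥ max( (6δ² + 22δ + 31)/6, (20δ + 56)/3 ). Then the spectral radius of K_s ∨ (K_{n−⌊5s/3⌋−1} ∪ (⌊2s/3⌋+1)·K_1) is strictly less than n − ⌊2δ/3⌋ − 2. -/
open SimpleGraph

/-! ### Auxiliary lemmas -/

section Aux

open Finset

lemma eig_of_mem_spectrum {m : ℕ} [F : Fintype (Fin m)] [E : DecidableEq (Fin m)]
    (M : Matrix (Fin m) (Fin m) ℝ) {μ : ℝ}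
    (h : μ ∈ spectrum ℝ M) : ∃ x : Fin m → ℝ, x ≠ 0 ∧ M.mulVec x = μ • x := by
  have h' : μ ∈ spectrum ℝ (Matrix.toLinAlgEquiv' M) := by
    rwa [AlgEquiv.spectrum_eq Matrix.toLinAlgEquiv' M]
  have he : Module.End.HasEigenvalue (Matrix.toLinAlgEquiv' M) μ :=
    Module.End.hasEigenvalue_iff_mem_spectrum.mpr h'
  obtain ⟨x, hx⟩ := he.exists_hasEigenvector
  exact ⟨x, hx.right, by
    simpa [Matrix.toLinAlgEquiv'_apply, Matrix.toLin'_apply] using hx.apply_eq_smul⟩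

lemma sq_le_of_eigen {m : ℕ} [F : Fintype (Fin m)] (hm : 0 < m) (M : Matrix (Fin m) (Fin m) ℝ)
    (hMnn : ∀ i j, 0 ≤ M i j) {R : ℝ}
    (hR : ∀ i, ∑ j, ∑ k, M i j * M j k ≤ R)
    {μ : ℝ} {x : Fin m → ℝ} (hx : x ≠ 0) (hev : M.mulVec x = μ • x) :
    μ ^ 2 ≤ R := by
  have : Nonempty (Fin m) := ⟨⟨0, hm⟩⟩
  obtain ⟨i, -, hi⟩ := Finset.exists_max_image Finset.univ (fun i => |x i|)
    ⟨⟨0, hm⟩, Finset.mem_univ _⟩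
  have hi' : ∀ k, |x k| ≤ |x i| := fun k => hi k (Finset.mem_univ k)
  have hxi : 0 < |x i| := by
    rcases Function.ne_iff.mp hx with ⟨k, hk⟩
    exact lt_of_lt_of_le (abs_pos.mpr hk) (hi' k)
  have key : μ ^ 2 * x i = ∑ j, ∑ k, M i j * (M j k * x k) := by
    have h2 : M.mulVec (M.mulVec x) = (μ ^ 2) • x := by
      rw [hev, Matrix.mulVec_smul, hev, smul_smul]; ring_nf
    have := congrFun h2 i
    simp only [Matrix.mulVec, dotProduct, Pi.smul_apply, smul_eq_mul] at this
    rw [← this]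
    congr 1
    ext j
    rw [Finset.mul_sum]
  have hb : |μ ^ 2 * x i| ≤ R * |x i| := by
    rw [key]
    calc |∑ j, ∑ k, M i j * (M j k * x k)|
        ≤ ∑ j, ∑ k, |M i j * (M j k * x k)| := by
          refine (Finset.abs_sum_le_sum_abs _ _).trans ?_
          exact Finset.sum_le_sum fun j _ => Finset.abs_sum_le_sum_abs _ _
      _ ≤ ∑ j, ∑ k, M i j * M j k * |x i| := by
          refine Finset.sum_le_sum fun j _ => Finset.sum_le_sum fun k _ => ?_
          rw [abs_mul, abs_mul, abs_of_nonneg (hMnn i j), abs_of_nonneg (hMnn j k), mul_assoc]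
          exact mul_le_mul_of_nonneg_left
            (mul_le_mul_of_nonneg_left (hi' k) (hMnn j k)) (hMnn i j)
      _ = (∑ j, ∑ k, M i j * M j k) * |x i| := by
          rw [Finset.sum_mul]; congr 1; ext j; rw [Finset.sum_mul]
      _ ≤ R * |x i| := mul_le_mul_of_nonneg_right (hR i) hxi.le
  rw [abs_mul] at hb
  have := (mul_le_mul_iff_of_pos_right hxi).mp hb
  calc μ ^ 2 ≤ |μ ^ 2| := le_abs_self _
    _ ≤ R := this

lemma extremal_adj_iff (n k : ℕ) (v w : Fin n) :
    (extremalGraph n (3 * k)).Adj v w ↔ v ≠ w ∧ ((v : ℕ) < 3 * k ∨ (w : ℕ) < 3 * k ∨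
      ((v : ℕ) < n - 2 * k - 1 ∧ (w : ℕ) < n - 2 * k - 1)) := by
  have h23 : 2 * (3 * k) / 3 = 2 * k := by omega
  show (v ≠ w ∧ _) ↔ _
  rw [h23]

lemma card_coe_lt' (n m : ℕ) [F : Fintype (Fin n)] (h : m ≤ n) :
    ((Finset.univ : Finset (Fin n)).filter (fun x : Fin n => (x : ℕ) < m)).card = m := by
  have : F = Fin.fintype n := Subsingleton.elim _ _
  subst this
  rw [Finset.card_filter, Fin.sum_univ_eq_sum_range (fun i => if i < m then 1 else 0),
    ← Finset.card_filter]
  have : (Finset.range n).filter (· < m) = Finset.range m := by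
    ext a; simp only [mem_filter, mem_range]; omega
  rw [this, Finset.card_range]

section Deg
variable (n k : ℕ) [F : Fintype (Fin n)] [D : DecidableRel (extremalGraph n (3 * k)).Adj]

lemma extremal_deg1 (hk : 1 ≤ k) (h5 : 5 * k + 1 ≤ n) (j : Fin n) (hj : (j : ℕ) < 3 * k) :
    (extremalGraph n (3 * k)).degree j = n - 1 := by
  have hF : F = Fin.fintype n := Subsingleton.elim _ _
  subst hF
  rw [SimpleGraph.degree, neighborFinset_eq_filter]
  have he : Finset.univ.filter ((extremalGraph n (3 * k)).Adj j)
      = Finset.univ.erase j := by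
    ext x
    simp only [mem_filter, mem_univ, true_and, and_true, mem_erase, extremal_adj_iff, ne_eq,
      Fin.ext_iff]
    omega
  rw [he, Finset.card_erase_of_mem (Finset.mem_univ _), Finset.card_univ, Fintype.card_fin]

lemma extremal_deg2 (hk : 1 ≤ k) (h5 : 5 * k + 1 ≤ n) (j : Fin n) (hj1 : 3 * k ≤ (j : ℕ))
    (hj2 : (j : ℕ) < n - 2 * k - 1) :
    (extremalGraph n (3 * k)).degree j = n - 2 * k - 2 := by
  rw [SimpleGraph.degree, neighborFinset_eq_filter]
  have he : Finset.univ.filter ((extremalGraph n (3 * k)).Adj j)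
      = (Finset.univ.filter (fun x : Fin n => (x : ℕ) < n - 2 * k - 1)).erase j := by
    ext x
    simp only [mem_filter, mem_univ, true_and, and_true, mem_erase, extremal_adj_iff, ne_eq,
      Fin.ext_iff]
    omega
  rw [he, Finset.card_erase_of_mem, card_coe_lt' n _ (by omega)]
  · omega
  · simp only [mem_filter, mem_univ, true_and]; exact hj2

lemma extremal_deg3 (hk : 1 ≤ k) (h5 : 5 * k + 1 ≤ n) (j : Fin n)
    (hj : n - 2 * k - 1 ≤ (j : ℕ)) :
    (extremalGraph n (3 * k)).degree j = 3 * k := by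
  rw [SimpleGraph.degree, neighborFinset_eq_filter]
  have he : Finset.univ.filter ((extremalGraph n (3 * k)).Adj j)
      = Finset.univ.filter (fun x : Fin n => (x : ℕ) < 3 * k) := by
    ext x
    simp only [mem_filter, mem_univ, true_and, and_true, extremal_adj_iff, ne_eq, Fin.ext_iff]
    omega
  rw [he, card_coe_lt' n _ (by omega)]

end Deg

lemma sum_piecewise_fin (n a b A B C : ℕ) [F : Fintype (Fin n)] (hab : a ≤ b) (hbn : b ≤ n)
    (f : Fin n → ℕ) (hA : ∀ j : Fin n, (j : ℕ) < a → f j = A)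
    (hB : ∀ j : Fin n, a ≤ (j : ℕ) → (j : ℕ) < b → f j = B)
    (hC : ∀ j : Fin n, b ≤ (j : ℕ) → f j = C) :
    ∑ j : Fin n, f j = a * A + (b - a) * B + (n - b) * C := by
  have hF : F = Fin.fintype n := Subsingleton.elim _ _
  subst hF
  have key : ∀ j : Fin n,
      f j = (fun i : ℕ => if i < a then A else if i < b then B else C) (j : ℕ) := by
    intro j
    by_cases h1 : (j : ℕ) < a
    · simp [h1, hA j h1]
    · by_cases h2 : (j : ℕ) < b
      · simp [h1, h2, hB j (by omega) h2]
      · simp [h1, h2, hC j (by omega)]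
  rw [Finset.sum_congr rfl (fun j _ => key j),
    Fin.sum_univ_eq_sum_range (fun i => if i < a then A else if i < b then B else C)]
  rw [Finset.range_eq_Ico, ← Finset.sum_Ico_consecutive _ (Nat.zero_le b) hbn,
    ← Finset.sum_Ico_consecutive _ (Nat.zero_le a) hab]
  have e1 : ∑ i ∈ Finset.Ico 0 a, (if i < a then A else if i < b then B else C) = a * A := by
    have h' : ∀ i ∈ Finset.Ico 0 a, (if i < a then A else if i < b then B else C) = A := by
      intro i hi; rw [Finset.mem_Ico] at hi; rw [if_pos hi.2]
    rw [Finset.sum_congr rfl h', Finset.sum_const, Nat.card_Ico, smul_eq_mul, Nat.sub_zero]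
  have e2 : ∑ i ∈ Finset.Ico a b, (if i < a then A else if i < b then B else C) = (b - a) * B := by
    have h' : ∀ i ∈ Finset.Ico a b, (if i < a then A else if i < b then B else C) = B := by
      intro i hi; rw [Finset.mem_Ico] at hi; rw [if_neg (by omega), if_pos hi.2]
    rw [Finset.sum_congr rfl h', Finset.sum_const, Nat.card_Ico, smul_eq_mul]
  have e3 : ∑ i ∈ Finset.Ico b n, (if i < a then A else if i < b then B else C) = (n - b) * C := by
    have h' : ∀ i ∈ Finset.Ico b n, (if i < a then A else if i < b then B else C) = C := by
      intro i hi; rw [Finset.mem_Ico] at hi; rw [if_neg (by omega), if_neg (by omega)]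
    rw [Finset.sum_congr rfl h', Finset.sum_const, Nat.card_Ico, smul_eq_mul]
  rw [e1, e2, e3]

lemma nbr_sum_le (n k : ℕ) [F : Fintype (Fin n)] [D : DecidableRel (extremalGraph n (3 * k)).Adj]
    (hk : 1 ≤ k) (h5 : 5 * k + 1 ≤ n) (i : Fin n) :
    ∑ j ∈ (extremalGraph n (3 * k)).neighborFinset i, (extremalGraph n (3 * k)).degree j
      ≤ (3 * k - 1) * (n - 1) + (n - 5 * k - 1) * (n - 2 * k - 2) + (2 * k + 1) * (3 * k) := by
  have hdeg : ∀ j : Fin n, (extremalGraph n (3 * k)).degree j =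
      (if (j : ℕ) < 3 * k then n - 1
        else if (j : ℕ) < n - 2 * k - 1 then n - 2 * k - 2 else 3 * k) := by
    intro j
    by_cases h1 : (j : ℕ) < 3 * k
    · rw [if_pos h1]; exact extremal_deg1 n k hk h5 j h1
    · by_cases h2 : (j : ℕ) < n - 2 * k - 1
      · rw [if_neg h1, if_pos h2]; exact extremal_deg2 n k hk h5 j (by omega) h2
      · rw [if_neg h1, if_neg h2]; exact extremal_deg3 n k hk h5 j (by omega)
  have h3k : (3 * k - 1) * (n - 1) + (n - 1) = 3 * k * (n - 1) := by
    obtain ⟨m, hm⟩ : ∃ m, 3 * k = m + 1 := ⟨3 * k - 1, by omega⟩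
    rw [hm]
    simp [Nat.add_sub_cancel, add_mul, one_mul]
  rw [neighborFinset_eq_filter]
  by_cases hi1 : (i : ℕ) < 3 * k
  · -- i in the dominating clique
    have he : Finset.univ.filter (fun w => (extremalGraph n (3 * k)).Adj i w)
        = Finset.univ.erase i := by
      ext x
      simp only [mem_filter, mem_univ, true_and, and_true, mem_erase, extremal_adj_iff,
        ne_eq, Fin.ext_iff]
      omega
    have htot : ∑ j : Fin n, (extremalGraph n (3 * k)).degree j
        = 3 * k * (n - 1) + (n - 5 * k - 1) * (n - 2 * k - 2) + (2 * k + 1) * (3 * k) := by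
      have hh := sum_piecewise_fin n (3 * k) (n - 2 * k - 1) (n - 1) (n - 2 * k - 2) (3 * k)
        (by omega) (by omega) (fun j => (extremalGraph n (3 * k)).degree j)
        (fun j hj => by simp only [hdeg]; split_ifs <;> omega)
        (fun j hj1 hj2 => by simp only [hdeg]; split_ifs <;> omega)
        (fun j hj => by simp only [hdeg]; split_ifs <;> omega)
      rw [hh]
      have e1 : n - 2 * k - 1 - 3 * k = n - 5 * k - 1 := by omega
      have e2 : n - (n - 2 * k - 1) = 2 * k + 1 := by omega
      rw [e1, e2]
    have hEq : (extremalGraph n (3 * k)).degree i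
          + ∑ j ∈ Finset.univ.erase i, (extremalGraph n (3 * k)).degree j
        = ∑ j : Fin n, (extremalGraph n (3 * k)).degree j :=
      Finset.add_sum_erase _ (fun j => (extremalGraph n (3 * k)).degree j) (Finset.mem_univ i)
    rw [he]
    rw [htot, hdeg, if_pos hi1, ← h3k] at hEq
    omega
  · by_cases hi2 : (i : ℕ) < n - 2 * k - 1
    · -- i in the second clique
      have he : Finset.univ.filter (fun w => (extremalGraph n (3 * k)).Adj i w)
          = (Finset.univ.filter (fun x : Fin n => (x : ℕ) < n - 2 * k - 1)).erase i := by
        ext x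
        simp only [mem_filter, mem_univ, true_and, and_true, mem_erase, extremal_adj_iff,
          ne_eq, Fin.ext_iff]
        omega
      have hS2 : ∑ j ∈ Finset.univ.filter (fun x : Fin n => (x : ℕ) < n - 2 * k - 1),
          (extremalGraph n (3 * k)).degree j
          = 3 * k * (n - 1) + (n - 5 * k - 1) * (n - 2 * k - 2) := by
        rw [Finset.sum_filter]
        have hh := sum_piecewise_fin n (3 * k) (n - 2 * k - 1) (n - 1) (n - 2 * k - 2) 0
          (by omega) (by omega)
          (fun j => if (j : ℕ) < n - 2 * k - 1 then (extremalGraph n (3 * k)).degree j else 0)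
          (fun j hj => by simp only [hdeg]; split_ifs <;> omega)
          (fun j hj1 hj2 => by simp only [hdeg]; split_ifs <;> omega)
          (fun j hj => by simp only [hdeg]; split_ifs <;> omega)
        rw [hh]
        have e1 : n - 2 * k - 1 - 3 * k = n - 5 * k - 1 := by omega
        rw [e1]
        omega
      have hmem : i ∈ Finset.univ.filter (fun x : Fin n => (x : ℕ) < n - 2 * k - 1) := by
        simp only [mem_filter, mem_univ, true_and]; exact hi2
      have hEq : (extremalGraph n (3 * k)).degree i
            + ∑ x ∈ (Finset.univ.filter (fun x : Fin n => (x : ℕ) < n - 2 * k - 1)).erase i,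
              (extremalGraph n (3 * k)).degree x
          = ∑ x ∈ Finset.univ.filter (fun x : Fin n => (x : ℕ) < n - 2 * k - 1),
              (extremalGraph n (3 * k)).degree x :=
        Finset.add_sum_erase _ (fun j => (extremalGraph n (3 * k)).degree j) hmem
      rw [he]
      rw [hS2, hdeg, if_neg hi1, if_pos hi2, ← h3k] at hEq
      have hz : 2 * k + 1 ≤ (2 * k + 1) * (3 * k) := Nat.le_mul_of_pos_right _ (by omega)
      generalize (2 * k + 1) * (3 * k) = Z at hz ⊢
      generalize (3 * k - 1) * (n - 1) = A at hEq ⊢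
      generalize (n - 5 * k - 1) * (n - 2 * k - 2) = X at hEq ⊢
      omega
    · -- i among the independent vertices
      have he : Finset.univ.filter (fun w => (extremalGraph n (3 * k)).Adj i w)
          = Finset.univ.filter (fun x : Fin n => (x : ℕ) < 3 * k) := by
        ext x
        simp only [mem_filter, mem_univ, true_and, extremal_adj_iff, ne_eq, Fin.ext_iff]
        omega
      have hS3 : ∑ j ∈ Finset.univ.filter (fun x : Fin n => (x : ℕ) < 3 * k),
          (extremalGraph n (3 * k)).degree j = 3 * k * (n - 1) := by
        rw [Finset.sum_filter]
        have hh := sum_piecewise_fin n (3 * k) (3 * k) (n - 1) 0 0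
          (le_refl _) (by omega)
          (fun j => if (j : ℕ) < 3 * k then (extremalGraph n (3 * k)).degree j else 0)
          (fun j hj => by simp only [hdeg]; split_ifs <;> omega)
          (fun j hj1 hj2 => by omega)
          (fun j hj => by simp only [hdeg]; split_ifs <;> omega)
        rw [hh]
        omega
      rw [he, hS3, ← h3k]
      have key : n - 1 ≤ (n - 5 * k - 1) * (n - 2 * k - 2) + (2 * k + 1) * (3 * k) := by
        zify [show 5 * k ≤ n by omega, show 1 ≤ n - 5 * k by omega,
          show 2 * k ≤ n by omega, show 2 ≤ n - 2 * k by omega, show 1 ≤ n by omega]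
        nlinarith [sq_nonneg ((n : ℤ) - 5 * k - 1), (by omega : (0:ℤ) ≤ (n:ℤ) - 5*k - 1),
          (by exact_mod_cast hk : (1:ℤ) ≤ (k:ℤ)),
          mul_nonneg (by omega : (0:ℤ) ≤ (n:ℤ) - 5*k - 1)
            (by push_cast; omega : (0:ℤ) ≤ 3*(k:ℤ) - 2)]
      generalize (2 * k + 1) * (3 * k) = Z at key ⊢
      generalize (3 * k - 1) * (n - 1) = A
      generalize (n - 5 * k - 1) * (n - 2 * k - 2) = X at key ⊢
      omega

lemma arith1 (n q t : ℤ) (ht : 1 ≤ t) (hq : 0 ≤ q)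
    (h1 : 5*(q+t)+1 ≤ n) (h2 : 9*q^2+17*q+10 ≤ n) (h3 : 20*q+26 ≤ n) :
    (3*(q+t)-1)*(n-1) + (n-5*(q+t)-1)*(n-2*(q+t)-2) + (2*(q+t)+1)*(3*(q+t)) + 1
      ≤ (n - 2*q - 2)^2 := by
  have ht0 : (0:ℤ) ≤ t := by linarith
  nlinarith [mul_nonneg hq ht0, mul_le_mul_of_nonneg_left h2 ht0,
    mul_le_mul_of_nonneg_left h1 ht0, sq_nonneg (t - 3*q), mul_nonneg (mul_nonneg hq hq) ht0]

lemma arith2 (n q t : ℤ) (ht : 1 ≤ t) (hq : 0 ≤ q)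
    (h1 : 5*(q+t)+1 ≤ n) (h2 : 9*q^2+23*q+17 ≤ n) (h3 : 20*q+32 ≤ n) :
    (3*(q+t)-1)*(n-1) + (n-5*(q+t)-1)*(n-2*(q+t)-2) + (2*(q+t)+1)*(3*(q+t)) + 1
      ≤ (n - (2*q+1) - 2)^2 := by
  have ht0 : (0:ℤ) ≤ t := by linarith
  nlinarith [mul_nonneg hq ht0, mul_le_mul_of_nonneg_left h2 ht0,
    mul_le_mul_of_nonneg_left h1 ht0, sq_nonneg (t - 3*q), mul_nonneg (mul_nonneg hq hq) ht0]

lemma sSup_spectrum_le_s16 {n : ℕ} [F : Fintype (Fin n)] [E : DecidableEq (Fin n)]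
    (hn : 0 < n) (G : SimpleGraph (Fin n)) [D : DecidableRel G.Adj] {R : ℝ} (hR0 : 0 ≤ R)
    (hdeg : ∀ i, ((∑ j ∈ G.neighborFinset i, G.degree j : ℕ) : ℝ) ≤ R) :
    sSup (spectrum ℝ (G.adjMatrix ℝ)) ≤ Real.sqrt R := by
  apply Real.sSup_le _ (Real.sqrt_nonneg R)
  intro μ hμ
  obtain ⟨x, hx0, hev⟩ := eig_of_mem_spectrum _ hμ
  have hrow : ∀ j, ∑ k, (G.adjMatrix ℝ) j k = (G.degree j : ℝ) := by
    intro j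
    simp only [SimpleGraph.adjMatrix_apply]
    rw [Finset.sum_boole, SimpleGraph.degree, neighborFinset_eq_filter]
  have hR' : ∀ i, ∑ j, ∑ k, (G.adjMatrix ℝ) i j * (G.adjMatrix ℝ) j k ≤ R := by
    intro i
    have e1 : ∑ j, ∑ k, (G.adjMatrix ℝ) i j * (G.adjMatrix ℝ) j k
        = ∑ j, (G.adjMatrix ℝ) i j * (G.degree j : ℝ) := by
      refine Finset.sum_congr rfl fun j _ => ?_
      rw [← Finset.mul_sum, hrow]
    have e2 : ∑ j, (G.adjMatrix ℝ) i j * (G.degree j : ℝ)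
        = ((∑ j ∈ G.neighborFinset i, G.degree j : ℕ) : ℝ) := by
      rw [Nat.cast_sum, neighborFinset_eq_filter, Finset.sum_filter]
      refine Finset.sum_congr rfl fun j _ => ?_
      simp [SimpleGraph.adjMatrix_apply, ite_mul]
    rw [e1, e2]
    exact hdeg i
  have hsq : μ ^ 2 ≤ R := sq_le_of_eigen hn _
    (fun i j => by simp [SimpleGraph.adjMatrix_apply]; positivity) hR' hx0 hev
  rcases le_or_gt μ 0 with h | h
  · exact h.trans (Real.sqrt_nonneg R)
  · exact (Real.le_sqrt h.le hR0).mpr hsq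

end Aux

set_option maxHeartbeats 2000000 in
theorem stmt16 (n s δ : ℕ) (hn1 : 1 ≤ n) (hs1 : 1 ≤ s) (hδ1 : 1 ≤ δ)
    (hδ3 : ¬ (3 ∣ δ)) (hs : s % 3 = 0) (hsδ : δ + 1 ≤ s) (hsn : 5 * s + 3 ≤ 3 * n)
    (hn : max ((6 * (δ : ℚ) ^ 2 + 22 * δ + 31) / 6) ((20 * (δ : ℚ) + 56) / 3) ≤ (n : ℚ)) :
    specRad (extremalGraph n s) < (n : ℝ) - (2 * δ / 3 : ℕ) - 2 := by
  obtain ⟨k, rfl⟩ : ∃ k, s = 3 * k := ⟨s / 3, by omega⟩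
  have hk : 1 ≤ k := by omega
  have h5 : 5 * k + 1 ≤ n := by omega
  -- extract the two numeric hypotheses over ℕ
  have hmax1 : (6 * (δ : ℚ) ^ 2 + 22 * δ + 31) / 6 ≤ (n : ℚ) :=
    le_trans (le_max_left _ _) hn
  have hmax2 : (20 * (δ : ℚ) + 56) / 3 ≤ (n : ℚ) := le_trans (le_max_right _ _) hn
  rw [div_le_iff₀ (by norm_num : (0:ℚ) < 6)] at hmax1
  rw [div_le_iff₀ (by norm_num : (0:ℚ) < 3)] at hmax2
  have hq1 : 6 * δ ^ 2 + 22 * δ + 31 ≤ 6 * n := by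
    have : (6 * (δ:ℚ) ^ 2 + 22 * δ + 31 : ℚ) ≤ 6 * n := by linarith
    exact_mod_cast this
  have hq2 : 20 * δ + 56 ≤ 3 * n := by
    have : (20 * (δ:ℚ) + 56 : ℚ) ≤ 3 * n := by linarith
    exact_mod_cast this
  set d : ℕ := 2 * δ / 3 with hd
  -- the key counting bound, as a natural-number inequality
  have hkey : (3 * k - 1) * (n - 1) + (n - 5 * k - 1) * (n - 2 * k - 2) + (2 * k + 1) * (3 * k)
      + 1 ≤ (n - d - 2) ^ 2 := by
    have hδq : δ % 3 = 1 ∨ δ % 3 = 2 := by omega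
    set q : ℕ := δ / 3 with hqdef
    have hkq : q + 1 ≤ k := by omega
    have hdn : d + 2 ≤ n := by omega
    zify [show 1 ≤ 3 * k by omega, show 5 * k ≤ n by omega, show 1 ≤ n - 5 * k by omega,
      show 2 * k ≤ n by omega, show 2 ≤ n - 2 * k by omega, show 1 ≤ n by omega,
      show d ≤ n by omega, show 2 ≤ n - d by omega]
    obtain ⟨t, htk⟩ : ∃ t, k = q + t := ⟨k - q, by omega⟩
    have ht1 : (1:ℤ) ≤ (t:ℤ) := by exact_mod_cast (by omega : 1 ≤ t)
    have hq0 : (0:ℤ) ≤ (q:ℤ) := Int.ofNat_nonneg q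
    have hktz : (k:ℤ) = (q:ℤ) + (t:ℤ) := by exact_mod_cast htk
    rcases hδq with h1 | h1
    · -- δ = 3q+1, d = 2q
      have hδeq : δ = 3 * q + 1 := by omega
      have hdeq : (d:ℤ) = 2 * (q:ℤ) := by
        have : d = 2 * q := by omega
        exact_mod_cast this
      have hn2 : 9 * (q:ℤ)^2 + 17 * q + 10 ≤ (n:ℤ) := by
        have ha : 54 * q^2 + 102 * q + 59 ≤ 6 * n := by nlinarith [hq1, hδeq]
        have hb : 9 * q^2 + 17 * q + 10 ≤ n := by
          generalize q ^ 2 = A at ha ⊢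
          omega
        exact_mod_cast hb
      have h5' : 5 * ((q:ℤ) + t) + 1 ≤ (n:ℤ) := by
        rw [← hktz]; exact_mod_cast h5
      have hn3 : 20 * (q:ℤ) + 26 ≤ (n:ℤ) := by
        have : 20 * q + 26 ≤ n := by omega
        exact_mod_cast this
      have := arith1 (n:ℤ) (q:ℤ) (t:ℤ) ht1 hq0 h5' hn2 hn3
      rw [← hktz] at this
      rw [hdeq]
      linarith
    · -- δ = 3q+2, d = 2q+1
      have hδeq : δ = 3 * q + 2 := by omega
      have hdeq : (d:ℤ) = 2 * (q:ℤ) + 1 := by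
        have : d = 2 * q + 1 := by omega
        exact_mod_cast this
      have hn2 : 9 * (q:ℤ)^2 + 23 * q + 17 ≤ (n:ℤ) := by
        have ha : 54 * q^2 + 138 * q + 99 ≤ 6 * n := by nlinarith [hq1, hδeq]
        have hb : 9 * q^2 + 23 * q + 17 ≤ n := by
          generalize q ^ 2 = A at ha ⊢
          omega
        exact_mod_cast hb
      have h5' : 5 * ((q:ℤ) + t) + 1 ≤ (n:ℤ) := by
        rw [← hktz]; exact_mod_cast h5
      have hn3 : 20 * (q:ℤ) + 32 ≤ (n:ℤ) := by
        have : 20 * q + 32 ≤ n := by omega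
        exact_mod_cast this
      have := arith2 (n:ℤ) (q:ℤ) (t:ℤ) ht1 hq0 h5' hn2 hn3
      rw [← hktz] at this
      rw [hdeq]
      linarith
  have hdn : d + 3 ≤ n := by omega
  -- spectral bound
  set R : ℝ := (((3 * k - 1) * (n - 1) + (n - 5 * k - 1) * (n - 2 * k - 2)
    + (2 * k + 1) * (3 * k) : ℕ) : ℝ) with hR
  have hbnd : specRad (extremalGraph n (3 * k)) ≤ Real.sqrt R := by
    unfold specRad
    letI := Fintype.ofFinite (Fin n)
    letI := Classical.decEq (Fin n)
    letI := Classical.decRel (extremalGraph n (3 * k)).Adj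
    exact sSup_spectrum_le_s16 (by omega) (extremalGraph n (3 * k)) (Nat.cast_nonneg _)
      (fun i => by exact_mod_cast Nat.cast_le.mpr (nbr_sum_le n k hk h5 i))
  refine lt_of_le_of_lt hbnd ?_
  have hpos : (0:ℝ) < (n:ℝ) - d - 2 := by
    have : (d:ℝ) + 3 ≤ (n:ℝ) := by exact_mod_cast hdn
    linarith
  rw [Real.sqrt_lt' hpos]
  have hcast : ((n - d - 2 : ℕ) : ℝ) = (n:ℝ) - d - 2 := by
    have h1 : d ≤ n := by omega
    have h2 : 2 ≤ n - d := by omega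
    push_cast [Nat.cast_sub h1, Nat.cast_sub h2]
    ring
  have h' : (3 * k - 1) * (n - 1) + (n - 5 * k - 1) * (n - 2 * k - 2) + (2 * k + 1) * (3 * k)
      < (n - d - 2) ^ 2 := by omega
  have h2 : R < ((n - d - 2 : ℕ) : ℝ) ^ 2 := by
    rw [hR]
    exact_mod_cast h'
  rwa [hcast] at h2
end
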